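/- arXiv:2507.02422 — 2 statements merged into one kernel-verified Lean document; each statement's English description precedes it below -/
import Mathlib

section
/- Let Φ be a positive linear map from the n×n complex matrices to the m×m complex matrices with Φ(1) ≤ 1 (a contractive positive map), let x be a Hermitian n×n complex matrix, and let f : ℝ → ℝ be a continuous convex function with f(0) = 0. Then Φ(x) is Hermitian and Tr f(Φ(x)) ≤ Tr Φ(f(x)). -/
/-!
Diagonalize `Φ x` in an orthonormal eigenbasis `(u_j)`. Each `ψ_j(y) = ⟨u_j, Φ(y) u_j⟩` is a
positive linear functional with `ψ_j(1) ≤ 1`. Writing `x = ∑ᵢ μᵢ Pᵢ` with rank-one spectral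
projections `Pᵢ`, the numbers `wᵢ = ψ_j(Pᵢ)` are nonnegative weights of total mass at most `1`, and
`λ_j = ψ_j(x) = ∑ᵢ wᵢ μᵢ`, `ψ_j(f(x)) = ∑ᵢ wᵢ f(μᵢ)`. Jensen's inequality for such subprobability
weights, valid because `f(0) ≤ 0`, gives `f(λ_j) ≤ ψ_j(f(x))`; summing over `j` gives the trace
inequality, since `Tr f(Φ x) = ∑_j f(λ_j)` and `Tr Φ(f(x)) = ∑_j ψ_j(f(x))`.
-/

open scoped ComplexOrder

/-- `g` applied to a Hermitian matrix via the functional calculus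
(`g(A) = ∑ᵢ g(λᵢ) Pᵢ` for the spectral decomposition `A = ∑ᵢ λᵢ Pᵢ`). -/
noncomputable def matFun {k : ℕ} {A : Matrix (Fin k) (Fin k) ℂ} (hA : A.IsHermitian)
    (g : ℝ → ℝ) : Matrix (Fin k) (Fin k) ℂ := hA.cfc g

open Matrix

theorem ConvexOn.map_sum_le_of_sum_le_one {𝕜 E β ι : Type*} [Field 𝕜] [LinearOrder 𝕜]
    [IsStrictOrderedRing 𝕜] [AddCommGroup E] [AddCommGroup β] [PartialOrder β]
    [IsOrderedAddMonoid β] [Module 𝕜 E] [Module 𝕜 β] [IsStrictOrderedModule 𝕜 β]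
    {s : Set E} {f : E → β} {t : Finset ι} {w : ι → 𝕜} {p : ι → E}
    (hf : ConvexOn 𝕜 s f) (h₀ : ∀ i ∈ t, 0 ≤ w i) (h₁ : ∑ i ∈ t, w i ≤ 1)
    (hmem : ∀ i ∈ t, p i ∈ s) (hs₀ : 0 ∈ s) (hf₀ : f 0 ≤ 0) :
    f (∑ i ∈ t, w i • p i) ≤ ∑ i ∈ t, w i • f (p i) := by
  -- the missing mass `1 - ∑ w` is placed at `0`
  have h := hf.map_add_sum_le h₀ (sub_add_cancel 1 _) hmem (sub_nonneg.2 h₁) hs₀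
  rw [smul_zero, zero_add] at h
  exact h.trans (add_le_of_nonpos_left (smul_nonpos_of_nonneg_of_nonpos (sub_nonneg.2 h₁) hf₀))

namespace Matrix

variable {n m 𝕜 : Type*} [RCLike 𝕜] [Fintype n]

noncomputable def vectorFunctional (u : n → 𝕜) : Matrix n n 𝕜 →ₗ[𝕜] 𝕜 where
  toFun M := star u ⬝ᵥ (M *ᵥ u)
  map_add' M N := by simp [add_mulVec, dotProduct_add]
  map_smul' c M := by simp [smul_mulVec]

theorem trace_eq_sum_star_dotProduct_mulVec (M : Matrix n n 𝕜)
    (b : OrthonormalBasis n 𝕜 (EuclideanSpace 𝕜 n)) :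
    M.trace = ∑ j, star ⇑(b j) ⬝ᵥ (M *ᵥ ⇑(b j)) := by
  classical
  rw [← trace_toLin_eq M (PiLp.basisFun 2 𝕜 n), ← toLpLin_eq_toLin,
    LinearMap.trace_eq_sum_inner _ b]
  simp [toLpLin_apply, EuclideanSpace.inner_eq_star_dotProduct, dotProduct_comm]

variable [DecidableEq n]

theorem star_dotProduct_mulVec_le_of_posSemidef_one_sub {M : Matrix n n 𝕜}
    (hM : (1 - M).PosSemidef) (u : n → 𝕜) : star u ⬝ᵥ (M *ᵥ u) ≤ star u ⬝ᵥ u := by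
  simpa [sub_mulVec, dotProduct_sub] using hM.dotProduct_mulVec_nonneg u

namespace IsHermitian

variable {A : Matrix n n 𝕜} (hA : A.IsHermitian)

noncomputable def eigenprojection (i : n) : Matrix n n 𝕜 :=
  vecMulVec ⇑(hA.eigenvectorBasis i) (star ⇑(hA.eigenvectorBasis i))

theorem eigenprojection_posSemidef (i : n) : (hA.eigenprojection i).PosSemidef :=
  posSemidef_vecMulVec_self_star _

theorem cfc_eq_sum_smul_eigenprojection (g : ℝ → ℝ) :
    hA.cfc g = ∑ i, g (hA.eigenvalues i) • hA.eigenprojection i := by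
  ext a b
  simp only [IsHermitian.cfc, Unitary.conjStarAlgAut_apply, mul_apply, eigenvectorUnitary_apply,
    diagonal_apply, Function.comp_apply, mul_ite, mul_zero, Finset.sum_ite_eq', Finset.mem_univ,
    ↓reduceIte, star_apply, RCLike.star_def, eigenprojection, sum_apply, smul_apply,
    vecMulVec_apply, Pi.star_apply, RCLike.real_smul_eq_coe_mul]
  exact Finset.sum_congr rfl fun _ _ ↦ by ring

theorem cfc_id_eq : hA.cfc id = A := by
  rw [← hA.cfc_eq, cfc_id ℝ A hA.isSelfAdjoint]

theorem sum_eigenprojection : ∑ i, hA.eigenprojection i = 1 := by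
  simpa [← hA.cfc_eq, cfc_const_one ℝ A] using (hA.cfc_eq_sum_smul_eigenprojection fun _ ↦ 1).symm

theorem star_dotProduct_eigenvectorBasis (i : n) :
    star ⇑(hA.eigenvectorBasis i) ⬝ᵥ ⇑(hA.eigenvectorBasis i) = 1 := by
  rw [dotProduct_comm, ← EuclideanSpace.inner_eq_star_dotProduct]
  simp

theorem trace_cfc (g : ℝ → ℝ) : (hA.cfc g).trace = ∑ i, (g (hA.eigenvalues i) : 𝕜) := by
  simp [hA.cfc_eq_sum_smul_eigenprojection, trace_sum, eigenprojection,
    dotProduct_comm _ (star _), hA.star_dotProduct_eigenvectorBasis, RCLike.real_smul_eq_coe_mul]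

theorem apply_of_preserves_posSemidef [Fintype m] (hA : A.IsHermitian)
    (Φ : Matrix n n 𝕜 →ₗ[𝕜] Matrix m m 𝕜) (hΦ : ∀ y, y.PosSemidef → (Φ y).PosSemidef) : (Φ A).IsHermitian := by
  rw [← hA.cfc_id_eq, hA.cfc_eq_sum_smul_eigenprojection, map_sum]
  refine isSelfAdjoint_sum _ fun i _ ↦ ?_
  rw [LinearMap.map_smul_of_tower]
  exact (hΦ _ (hA.eigenprojection_posSemidef i)).isHermitian.smul (IsSelfAdjoint.all _)

end IsHermitian

end Matrix

theorem ConvexOn.map_re_apply_le_apply_cfc {n 𝕜 : Type*} [RCLike 𝕜] [Fintype n] [DecidableEq n]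
    {s : Set ℝ} {f : ℝ → ℝ} (hf : ConvexOn ℝ s f) (hs₀ : 0 ∈ s) (hf₀ : f 0 ≤ 0)
    (ψ : Matrix n n 𝕜 →ₗ[𝕜] 𝕜) (hψ : ∀ y : Matrix n n 𝕜, y.PosSemidef → 0 ≤ ψ y) (hψ₁ : ψ 1 ≤ 1)
    {A : Matrix n n 𝕜} (hA : A.IsHermitian) (hAs : spectrum ℝ A ⊆ s) :
    (f (RCLike.re (ψ A)) : 𝕜) ≤ ψ (hA.cfc f) := by
  choose w hw₀ hψP using fun i ↦
    RCLike.nonneg_iff_exists_ofReal.1 (hψ _ (hA.eigenprojection_posSemidef i))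
  have hψ_cfc (g : ℝ → ℝ) : ψ (hA.cfc g) = ((∑ i, w i * g (hA.eigenvalues i) : ℝ) : 𝕜) := by
    simp [hA.cfc_eq_sum_smul_eigenprojection, LinearMap.map_smul_of_tower, ← hψP,
      RCLike.real_smul_eq_coe_mul, mul_comm]
  have hw₁ : ∑ i, w i ≤ 1 := by
    rw [← hA.sum_eigenprojection, map_sum] at hψ₁
    simp_rw [← hψP] at hψ₁
    exact_mod_cast hψ₁
  have hψA : RCLike.re (ψ A) = ∑ i, w i * hA.eigenvalues i := by
    conv_lhs => rw [← hA.cfc_id_eq, hψ_cfc id, RCLike.ofReal_re]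
    rfl
  rw [hψ_cfc f, hψA, RCLike.ofReal_le_ofReal]
  exact hf.map_sum_le_of_sum_le_one (fun i _ ↦ hw₀ i) hw₁
    (fun i _ ↦ hAs (hA.eigenvalues_mem_spectrum_real i)) hs₀ hf₀

theorem trace_jensen_contractive_positive_map_of_isHermitian_general {n m : ℕ}
    (Φ : Matrix (Fin n) (Fin n) ℂ →ₗ[ℂ] Matrix (Fin m) (Fin m) ℂ)
    (hΦpos : ∀ y : Matrix (Fin n) (Fin n) ℂ, y.PosSemidef → (Φ y).PosSemidef)
    (hΦ1 : (1 - Φ 1).PosSemidef)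
    {x : Matrix (Fin n) (Fin n) ℂ} (hx : x.IsHermitian)
    (f : ℝ → ℝ) (hconv : ConvexOn ℝ Set.univ f)
    (hf0 : f 0 = 0) :
    ∃ hΦx : (Φ x).IsHermitian,
      (matFun hΦx f).trace ≤ (Φ (matFun hx f)).trace := by
  have hΦx := hx.apply_of_preserves_posSemidef Φ hΦpos
  refine ⟨hΦx, ?_⟩
  rw [matFun, matFun, hΦx.trace_cfc, trace_eq_sum_star_dotProduct_mulVec _ hΦx.eigenvectorBasis]
  refine Finset.sum_le_sum fun j _ ↦ ?_
  set u := ⇑(hΦx.eigenvectorBasis j)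
  rw [hΦx.eigenvalues_eq j]
  exact hconv.map_re_apply_le_apply_cfc (Set.mem_univ 0) hf0.le (vectorFunctional u ∘ₗ Φ)
    (fun y hy ↦ (hΦpos y hy).dotProduct_mulVec_nonneg u)
    ((star_dotProduct_mulVec_le_of_posSemidef_one_sub hΦ1 u).trans_eq
      (hΦx.star_dotProduct_eigenvectorBasis j)) hx (Set.subset_univ _)

/-- **Trace Jensen inequality for contractive positive maps, Hermitian version.**
If `Φ` is a positive linear map from `n×n` to `m×m` complex matrices with `Φ(1) ≤ 1`
(in the Loewner order, i.e. `1 - Φ(1)` is positive semidefinite), `x` is Hermitian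
and `f : ℝ → ℝ` is a continuous convex function with `f(0) = 0`, then `Φ(x)` is Hermitian and
`Tr f(Φ(x)) ≤ Tr Φ(f(x))`. -/
theorem trace_jensen_contractive_positive_map_of_isHermitian {n m : ℕ}
    (Φ : Matrix (Fin n) (Fin n) ℂ →ₗ[ℂ] Matrix (Fin m) (Fin m) ℂ)
    (hΦpos : ∀ y : Matrix (Fin n) (Fin n) ℂ, y.PosSemidef → (Φ y).PosSemidef)
    (hΦ1 : (1 - Φ 1).PosSemidef)
    {x : Matrix (Fin n) (Fin n) ℂ} (hx : x.IsHermitian)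
    (f : ℝ → ℝ) (hf : Continuous f) (hconv : ConvexOn ℝ Set.univ f)
    (hf0 : f 0 = 0) :
    ∃ hΦx : (Φ x).IsHermitian,
      (matFun hΦx f).trace ≤ (Φ (matFun hx f)).trace :=
  trace_jensen_contractive_positive_map_of_isHermitian_general Φ hΦpos hΦ1 hx f hconv hf0
end

section
/- Let Φ be a positive unital linear map from the n×n complex matrices to themselves, let x be a Hermitian n×n complex matrix, let f : ℝ → ℝ be a continuous convex function, let I ⊆ ℝ be an interval on which f is monotone and f(t) ≥ 0, set p := e_I(Φ(x)), and let s > 0. If ξ is a unit vector in ℂ^n satisfying e_{{t∈I : f(t)>s}}(Φ(x))·ξ = ξ, then Re⟨Φ(f(x))ξ, ξ⟩ > s; consequently the ranges of the spectral projections e_{(s,∞)}(p·f(Φ(x))·p) and e_{(−∞,s]}(p·Φ(f(x))·p) intersect trivially. -/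
open Matrix
open scoped ComplexOrder

lemma matFun_isHermitian {k : ℕ} {A : Matrix (Fin k) (Fin k) ℂ} (hA : A.IsHermitian)
    (g : ℝ → ℝ) : (matFun hA g).IsHermitian := by
  rw [matFun, ← hA.cfc_eq g]
  exact cfc_predicate g A

/-- The spectral projection `e_S(A) = ∑_{i : λᵢ ∈ S} Pᵢ` of a Hermitian matrix `A`
on a set `S ⊆ ℝ`. -/
noncomputable def specProj {k : ℕ} {A : Matrix (Fin k) (Fin k) ℂ} (hA : A.IsHermitian)
    (S : Set ℝ) : Matrix (Fin k) (Fin k) ℂ := matFun hA (Set.indicator S 1)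

/-!
Expand `x = ∑ⱼ μⱼ Qⱼ` in rank-one eigenprojections. For a unit vector `ξ`, positivity and
unitality of `Φ` make `wⱼ = ⟨Φ(Qⱼ)ξ, ξ⟩` probability weights with `⟨Φ(g(x))ξ, ξ⟩ = ∑ⱼ g(μⱼ) wⱼ`,
so Jensen gives `f ⟨Φ(x)ξ, ξ⟩ ≤ ⟨Φ(f(x))ξ, ξ⟩`. The same expansion for `Φ(x)` itself shows that
`⟨Φ(x)ξ, ξ⟩` is a convex combination of eigenvalues in `J = {t ∈ I | s < f t}` when
`e_J(Φ(x))ξ = ξ`; `J` is an interval because `f` is monotone or antitone on `I`, so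
`s < f ⟨Φ(x)ξ, ξ⟩`.

For the ranges, `e_(s,∞)(p f(Φ(x)) p) = e_J(Φ(x))`, so a common unit vector `ξ` has `pξ = ξ` and
`s < ⟨Φ(f(x))ξ, ξ⟩ = ⟨p Φ(f(x)) p ξ, ξ⟩ ≤ s`.
-/

theorem Set.OrdConnected.sep_lt_of_monotoneOn_or_antitoneOn {α β : Type*} [Preorder α]
    [Preorder β] {I : Set α} (hI : I.OrdConnected) {f : α → β}
    (hf : MonotoneOn f I ∨ AntitoneOn f I) (s : β) : {t | t ∈ I ∧ s < f t}.OrdConnected := by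
  refine ⟨fun a ha b hb u hu => ?_⟩
  have huI : u ∈ I := hI.out ha.1 hb.1 hu
  refine ⟨huI, ?_⟩
  rcases hf with hf | hf
  · exact ha.2.trans_le (hf ha.1 huI hu.1)
  · exact hb.2.trans_le (hf huI hb.1 hu.2)

lemma Matrix.mulVec_eq_self_of_mem_range {m R : Type*} [Fintype m] [Semiring R]
    {P : Matrix m m R} (hP : P * P = P) {v : m → R} (hv : v ∈ Set.range P.mulVec) :
    P *ᵥ v = v := by
  obtain ⟨w, rfl⟩ := hv
  rw [mulVec_mulVec, hP]

lemma Matrix.star_dotProduct_mul_mul_mulVec_of_mulVec_eq_self {m R : Type*} [Fintype m]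
    [CommSemiring R] [StarRing R] {P : Matrix m m R} (hP : P.IsHermitian) (M : Matrix m m R)
    {v : m → R} (hv : P *ᵥ v = v) : star v ⬝ᵥ (P * M * P) *ᵥ v = star v ⬝ᵥ M *ᵥ v := by
  have hvP : star v ᵥ* P = star v := by
    rw [← hP.eq, ← star_mulVec, hv]
  rw [← mulVec_mulVec, ← mulVec_mulVec, hv, dotProduct_mulVec, hvP]

lemma exists_smul_star_dotProduct_smul_eq_one {m 𝕜 : Type*} [Fintype m] [RCLike 𝕜]
    {v : m → 𝕜} (hv : v ≠ 0) : ∃ c : 𝕜, star (c • v) ⬝ᵥ (c • v) = 1 := by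
  obtain ⟨r, hr, hrv⟩ := RCLike.pos_iff_exists_ofReal.mp (dotProduct_star_self_pos_iff.mpr hv)
  refine ⟨((√r)⁻¹ : ℝ), ?_⟩
  rw [star_smul, smul_dotProduct, dotProduct_smul, ← hrv, RCLike.star_def, RCLike.conj_ofReal,
    smul_eq_mul, smul_eq_mul, ← RCLike.ofReal_mul, ← RCLike.ofReal_mul, ← mul_assoc, ← mul_inv,
    Real.mul_self_sqrt hr.le, inv_mul_cancel₀ hr.ne', RCLike.ofReal_one]

section MatFun

variable {k : ℕ} {A : Matrix (Fin k) (Fin k) ℂ}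

lemma matFun_mul (hA : A.IsHermitian) (g h : ℝ → ℝ) :
    matFun hA g * matFun hA h = matFun hA (fun t => g t * h t) := by
  simp only [matFun, ← hA.cfc_eq]
  exact (cfc_mul g h A (finite_real_spectrum.continuousOn g)
    (finite_real_spectrum.continuousOn h)).symm

lemma matFun_id (hA : A.IsHermitian) : matFun hA id = A := by
  rw [matFun, ← hA.cfc_eq, cfc_id ℝ A]

lemma matFun_one (hA : A.IsHermitian) : matFun hA 1 = 1 := by
  rw [matFun, ← hA.cfc_eq]
  exact cfc_const_one ℝ A

lemma matFun_comp (hA : A.IsHermitian) (g h : ℝ → ℝ) (hB : (matFun hA h).IsHermitian) :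
    matFun hB g = matFun hA (g ∘ h) := by
  rw [matFun, ← hB.cfc_eq]
  simp only [matFun, ← hA.cfc_eq]
  exact (cfc_comp g h A hA ((finite_real_spectrum.image h).continuousOn g)
    (finite_real_spectrum.continuousOn h)).symm

lemma specProj_congr {B : Matrix (Fin k) (Fin k) ℂ} (hA : A.IsHermitian) (hB : B.IsHermitian)
    (hAB : A = B) (S : Set ℝ) : specProj hA S = specProj hB S := by
  subst hAB; rfl

lemma specProj_matFun (hA : A.IsHermitian) (g : ℝ → ℝ) (hB : (matFun hA g).IsHermitian)
    (S : Set ℝ) : specProj hB S = specProj hA (g ⁻¹' S) := by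
  rw [specProj, specProj, matFun_comp]
  rfl

lemma matFun_mul_specProj (hA : A.IsHermitian) (g : ℝ → ℝ) (S : Set ℝ) :
    matFun hA g * specProj hA S = matFun hA (S.indicator g) := by
  rw [specProj, matFun_mul]
  congr 1
  ext t
  by_cases ht : t ∈ S <;> simp [ht]

lemma specProj_mul_specProj (hA : A.IsHermitian) (S T : Set ℝ) :
    specProj hA S * specProj hA T = specProj hA (T ∩ S) := by
  rw [specProj, matFun_mul_specProj, Set.indicator_indicator]
  rfl

lemma specProj_mul_matFun_mul_specProj (hA : A.IsHermitian) (g : ℝ → ℝ) (S : Set ℝ) :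
    specProj hA S * matFun hA g * specProj hA S = matFun hA (S.indicator g) := by
  simp only [specProj, matFun_mul]
  congr 1
  ext t
  by_cases ht : t ∈ S <;> simp [ht]

lemma specProj_mul_self (hA : A.IsHermitian) (S : Set ℝ) :
    specProj hA S * specProj hA S = specProj hA S := by
  rw [specProj_mul_specProj, Set.inter_self]

noncomputable def eigProj (hA : A.IsHermitian) (j : Fin k) : Matrix (Fin k) (Fin k) ℂ :=
  Unitary.conjStarAlgAut ℂ _ hA.eigenvectorUnitary (single j j 1)

lemma matFun_eq_sum_eigProj (hA : A.IsHermitian) (g : ℝ → ℝ) :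
    matFun hA g = ∑ j, (g (hA.eigenvalues j) : ℂ) • eigProj hA j := by
  rw [matFun, IsHermitian.cfc, ← sum_single_eq_diagonal, map_sum]
  refine Finset.sum_congr rfl fun j _ => ?_
  rw [eigProj, ← map_smul, smul_single, smul_eq_mul, mul_one]
  rfl

lemma eigProj_posSemidef (hA : A.IsHermitian) (j : Fin k) : (eigProj hA j).PosSemidef := by
  rw [eigProj, Unitary.conjStarAlgAut_apply, ← diagonal_single]
  exact (PosSemidef.diagonal (Pi.single_nonneg.mpr zero_le_one)).mul_mul_conjTranspose_same _

end MatFun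

section VectorState

variable {k : ℕ} {m : Type*} [Fintype m] {A : Matrix (Fin k) (Fin k) ℂ}

lemma re_dotProduct_map_matFun_mulVec (Ψ : Matrix (Fin k) (Fin k) ℂ →ₗ[ℂ] Matrix m m ℂ)
    (hA : A.IsHermitian) (g : ℝ → ℝ) (v : m → ℂ) :
    (star v ⬝ᵥ Ψ (matFun hA g) *ᵥ v).re
      = ∑ j, g (hA.eigenvalues j) * (star v ⬝ᵥ Ψ (eigProj hA j) *ᵥ v).re := by
  simp [matFun_eq_sum_eigProj, sum_mulVec, dotProduct_sum, smul_mulVec]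

lemma re_dotProduct_map_eigProj_mulVec_nonneg (Ψ : Matrix (Fin k) (Fin k) ℂ →ₗ[ℂ] Matrix m m ℂ)
    (hΨ : ∀ y, y.PosSemidef → (Ψ y).PosSemidef) (hA : A.IsHermitian) (j : Fin k) (v : m → ℂ) :
    0 ≤ (star v ⬝ᵥ Ψ (eigProj hA j) *ᵥ v).re :=
  Complex.nonneg_iff.mp ((hΨ _ (eigProj_posSemidef hA j)).dotProduct_mulVec_nonneg v) |>.1

theorem ConvexOn.map_re_dotProduct_mulVec_le [DecidableEq m] {f : ℝ → ℝ} {D : Set ℝ}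
    (hf : ConvexOn ℝ D f) (Ψ : Matrix (Fin k) (Fin k) ℂ →ₗ[ℂ] Matrix m m ℂ)
    (hΨ : ∀ y, y.PosSemidef → (Ψ y).PosSemidef) (hΨ1 : Ψ 1 = 1)
    (hA : A.IsHermitian) (hD : ∀ j, hA.eigenvalues j ∈ D) {ξ : m → ℂ} (hξ : star ξ ⬝ᵥ ξ = 1) :
    f (star ξ ⬝ᵥ Ψ A *ᵥ ξ).re ≤ (star ξ ⬝ᵥ Ψ (matFun hA f) *ᵥ ξ).re := by
  set w : Fin k → ℝ := fun j => (star ξ ⬝ᵥ Ψ (eigProj hA j) *ᵥ ξ).re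
  have hw_sum : ∑ j, w j = 1 := by
    simpa [matFun_one, hΨ1, hξ] using (re_dotProduct_map_matFun_mulVec Ψ hA 1 ξ).symm
  have hmean : (star ξ ⬝ᵥ Ψ A *ᵥ ξ).re = ∑ j, w j • hA.eigenvalues j := by
    simpa [matFun_id, mul_comm] using re_dotProduct_map_matFun_mulVec Ψ hA id ξ
  rw [hmean, re_dotProduct_map_matFun_mulVec]
  simpa [mul_comm] using
    hf.map_sum_le (fun j _ => re_dotProduct_map_eigProj_mulVec_nonneg Ψ hΨ hA j ξ) hw_sum
      (fun j _ => hD j)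

end VectorState

section NumericalRange

variable {k : ℕ} {A : Matrix (Fin k) (Fin k) ℂ}

lemma re_dotProduct_mulVec_mem_of_specProj_mulVec_eq_self (hA : A.IsHermitian) {J : Set ℝ}
    (hJ : Convex ℝ J) {v : Fin k → ℂ} (hv : star v ⬝ᵥ v = 1) (hJv : specProj hA J *ᵥ v = v) :
    (star v ⬝ᵥ A *ᵥ v).re ∈ J := by
  classical
  set w : Fin k → ℝ := fun j => (star v ⬝ᵥ eigProj hA j *ᵥ v).re
  have hre_matFun (g : ℝ → ℝ) : (star v ⬝ᵥ matFun hA g *ᵥ v).re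
      = ∑ j with hA.eigenvalues j ∈ J, w j * g (hA.eigenvalues j) := by
    have hg : matFun hA g *ᵥ v = matFun hA (J.indicator g) *ᵥ v := by
      rw [← matFun_mul_specProj, ← mulVec_mulVec, hJv]
    rw [hg, Finset.sum_filter]
    simpa [Set.indicator_apply, mul_comm] using
      re_dotProduct_map_matFun_mulVec LinearMap.id hA (J.indicator g) v
  have hw_sum : ∑ j with hA.eigenvalues j ∈ J, w j = 1 := by
    simpa [matFun_one, hv] using (hre_matFun 1).symm
  have hmean : (star v ⬝ᵥ A *ᵥ v).re
      = ∑ j with hA.eigenvalues j ∈ J, w j • hA.eigenvalues j := by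
    simpa [matFun_id] using hre_matFun id
  rw [hmean]
  exact hJ.sum_mem
    (fun j _ => re_dotProduct_map_eigProj_mulVec_nonneg LinearMap.id (fun _ h => h) hA j v)
    hw_sum (fun j hj => (Finset.mem_filter.mp hj).2)

end NumericalRange

theorem specProj_inner_gt_and_ranges_trivial_general {n : ℕ}
    (Φ : Matrix (Fin n) (Fin n) ℂ →ₗ[ℂ] Matrix (Fin n) (Fin n) ℂ)
    (hΦpos : ∀ y : Matrix (Fin n) (Fin n) ℂ, y.PosSemidef → (Φ y).PosSemidef)
    (hΦ1 : Φ 1 = 1)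
    {x : Matrix (Fin n) (Fin n) ℂ} (hx : x.IsHermitian)
    (f : ℝ → ℝ) (hconv : ConvexOn ℝ Set.univ f)
    (I : Set ℝ) (hI : I.OrdConnected)
    (hmono : MonotoneOn f I ∨ AntitoneOn f I)
    (s : ℝ) (hs : 0 < s) :
    ∀ hΦx : (Φ x).IsHermitian,
      (∀ ξ : Fin n → ℂ, star ξ ⬝ᵥ ξ = 1 →
          (specProj hΦx {t | t ∈ I ∧ s < f t}).mulVec ξ = ξ →
          s < (star ξ ⬝ᵥ (Φ (matFun hx f)).mulVec ξ).re) ∧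
      ∀ (h1 : (specProj hΦx I * matFun hΦx f * specProj hΦx I).IsHermitian)
        (h2 : (specProj hΦx I * Φ (matFun hx f) * specProj hΦx I).IsHermitian),
        ∀ v : Fin n → ℂ,
          v ∈ Set.range (specProj h1 (Set.Ioi s)).mulVec →
          v ∈ Set.range (specProj h2 (Set.Iic s)).mulVec → v = 0 := by
  intro hΦx
  set J := {t | t ∈ I ∧ s < f t}
  have hJ : Convex ℝ J := (hI.sep_lt_of_monotoneOn_or_antitoneOn hmono s).convex
  have hquad_gt (ξ : Fin n → ℂ) (hξ : star ξ ⬝ᵥ ξ = 1) (hJξ : specProj hΦx J *ᵥ ξ = ξ) :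
      s < (star ξ ⬝ᵥ Φ (matFun hx f) *ᵥ ξ).re :=
    (re_dotProduct_mulVec_mem_of_specProj_mulVec_eq_self hΦx hJ hξ hJξ).2.trans_le
      (hconv.map_re_dotProduct_mulVec_le Φ hΦpos hΦ1 hx (fun _ => Set.mem_univ _) hξ)
  refine ⟨hquad_gt, fun h1 h2 v hv1 hv2 => ?_⟩
  -- `p f(Φ(x)) p` vanishes off the range of `p`, and `0 ∉ (s, ∞)` as `s > 0`.
  have hJ_eq : specProj h1 (Set.Ioi s) = specProj hΦx J := by
    rw [specProj_congr h1 (matFun_isHermitian hΦx (I.indicator f))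
      (specProj_mul_matFun_mul_specProj hΦx f I), specProj_matFun]
    congr 1
    ext t
    by_cases ht : t ∈ I <;> simp [ht, J, hs.not_gt]
  have hJv : specProj hΦx J *ᵥ v = v :=
    mulVec_eq_self_of_mem_range (specProj_mul_self hΦx J) (hJ_eq ▸ hv1)
  have hIv : specProj hΦx I *ᵥ v = v := by
    rw [← hJv, mulVec_mulVec, specProj_mul_specProj,
      Set.inter_eq_left.mpr fun _ ht => ht.1]
  have hv_Iic : specProj h2 (Set.Iic s) *ᵥ v = v :=
    mulVec_eq_self_of_mem_range (specProj_mul_self h2 _) hv2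
  by_contra hv0
  obtain ⟨c, hc⟩ := exists_smul_star_dotProduct_smul_eq_one hv0
  have hlt := hquad_gt (c • v) hc (by rw [mulVec_smul, hJv])
  have hle := re_dotProduct_mulVec_mem_of_specProj_mulVec_eq_self h2 (convex_Iic s) hc
    (by rw [mulVec_smul, hv_Iic])
  rw [star_dotProduct_mul_mul_mulVec_of_mulVec_eq_self (P := specProj hΦx I)
    (matFun_isHermitian hΦx _) _ (by rw [mulVec_smul, hIv])] at hle
  exact (hlt.trans_le hle).false

/-- **Key step in the spectral comparison lemma.**
Let `Φ` be a positive unital linear map on `n×n` matrices, `x` Hermitian, `f` continuous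
convex, `I` an interval on which `f` is monotone and nonnegative, `p = e_I(Φ(x))`, and
`s > 0`. If `ξ` is a unit vector with `e_{{t ∈ I : f(t) > s}}(Φ(x)) ξ = ξ`, then
`Re⟨Φ(f(x))ξ, ξ⟩ > s`; consequently the ranges of `e_(s,∞)(p·f(Φ(x))·p)` and
`e_(−∞,s](p·Φ(f(x))·p)` intersect trivially. -/
theorem specProj_inner_gt_and_ranges_trivial {n : ℕ}
    (Φ : Matrix (Fin n) (Fin n) ℂ →ₗ[ℂ] Matrix (Fin n) (Fin n) ℂ)
    (hΦpos : ∀ y : Matrix (Fin n) (Fin n) ℂ, y.PosSemidef → (Φ y).PosSemidef)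
    (hΦ1 : Φ 1 = 1)
    {x : Matrix (Fin n) (Fin n) ℂ} (hx : x.IsHermitian)
    (f : ℝ → ℝ) (hf : Continuous f) (hconv : ConvexOn ℝ Set.univ f)
    (I : Set ℝ) (hI : I.OrdConnected)
    (hmono : MonotoneOn f I ∨ AntitoneOn f I) (hfI : ∀ t ∈ I, 0 ≤ f t)
    (s : ℝ) (hs : 0 < s) :
    ∀ hΦx : (Φ x).IsHermitian,
      (∀ ξ : Fin n → ℂ, star ξ ⬝ᵥ ξ = 1 →
          (specProj hΦx {t | t ∈ I ∧ s < f t}).mulVec ξ = ξ →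
          s < (star ξ ⬝ᵥ (Φ (matFun hx f)).mulVec ξ).re) ∧
      ∀ (h1 : (specProj hΦx I * matFun hΦx f * specProj hΦx I).IsHermitian)
        (h2 : (specProj hΦx I * Φ (matFun hx f) * specProj hΦx I).IsHermitian),
        ∀ v : Fin n → ℂ,
          v ∈ Set.range (specProj h1 (Set.Ioi s)).mulVec →
          v ∈ Set.range (specProj h2 (Set.Iic s)).mulVec → v = 0 :=
  specProj_inner_gt_and_ranges_trivial_general Φ hΦpos hΦ1 hx f hconv I hI hmono s hs
end
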